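/- (Posterior decomposition bound) Let f_θ be a family of densities, π a prior on a parameter space, θ* the true parameter, C a measurable set of parameters, κ a test function with values in [0,1], and H = {y : ∫ (f_θ(y)/f_{θ*}(y)) π(dθ) ≥ e^{-c}}. Then E_{θ*}[Π(C | y)] ≤ E_{θ*}[κ] + e^{c} · sup_{θ∈C} E_θ[1 − κ] + P_{θ*}(H^c), where Π(C|y) = ∫_C f_θ(y)π(dθ)/∫ f_θ(y)π(dθ). -/

import Mathlib

/-!
Write `Π(C|y) = κ(y) Π(C|y) + (1 - κ(y)) Π(C|y) ≤ κ(y) + (1 - κ(y)) Π(C|y)`. Off `H` the last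
term is at most `1`. On `H` the denominator `∫ f_θ(y) π(dθ)` is at least `e^{-c} f_{θ*}(y)`, so
`(1 - κ(y)) Π(C|y) f_{θ*}(y) ≤ e^c ∫_C (1 - κ(y)) f_θ(y) π(dθ)`; integrating in `y` and exchanging
the integrals (Fubini, legitimate because `E_θ[1 - κ]` is bounded on `C`) bounds this contribution
by `e^c sup_{θ ∈ C} E_θ[1 - κ]`.
-/

open MeasureTheory

theorem Real.le_biSup_of_bddAbove {ι : Type*} {g : ι → ℝ} {C : Set ι} (hg : BddAbove (g '' C))
    {i : ι} (hi : i ∈ C) : g i ≤ ⨆ j ∈ C, g j := by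
  obtain ⟨M, hM⟩ := hg
  have hbdd : BddAbove (Set.range fun j => ⨆ _ : j ∈ C, g j) :=
    ⟨max M 0, Set.forall_mem_range.2 fun j => Real.iSup_le
      (fun hj => le_max_of_le_left (hM (Set.mem_image_of_mem g hj))) (le_max_right M 0)⟩
  calc g i = ⨆ _ : i ∈ C, g i := (ciSup_pos (f := fun _ => g i) hi).symm
    _ ≤ ⨆ j ∈ C, g j := le_ciSup hbdd i

section Fubini

variable {Θ Y : Type*} [MeasurableSpace Θ] [MeasurableSpace Y] {π : Measure Θ} {ν : Measure Y}
  [SFinite ν] {φ : Θ → Y → ℝ} {C : Set Θ}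

theorem integrable_restrict_prod_of_bddAbove [IsFiniteMeasure π]
    (hφ : StronglyMeasurable (Function.uncurry φ)) (hφ_nonneg : ∀ θ y, 0 ≤ φ θ y)
    (hC : MeasurableSet C) (hint : ∀ θ ∈ C, Integrable (φ θ) ν)
    (hbdd : BddAbove ((fun θ => ∫ y, φ θ y ∂ν) '' C)) :
    Integrable (Function.uncurry φ) ((π.restrict C).prod ν) := by
  obtain ⟨S, hS⟩ := hbdd
  refine (integrable_prod_iff hφ.aestronglyMeasurable).2 ⟨ae_restrict_of_forall_mem hC hint, ?_⟩
  refine (integrable_const S).mono' hφ.norm.integral_prod_right'.aestronglyMeasurable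
    (ae_restrict_of_forall_mem hC fun θ hθ => ?_)
  simp only [Function.uncurry_apply_pair, Real.norm_eq_abs, abs_of_nonneg (hφ_nonneg _ _)]
  rw [abs_of_nonneg (integral_nonneg fun y => hφ_nonneg θ y)]
  exact hS (Set.mem_image_of_mem _ hθ)

theorem integral_setIntegral_le_biSup [IsProbabilityMeasure π]
    (hφ : Integrable (Function.uncurry φ) ((π.restrict C).prod ν)) (hφ_nonneg : ∀ θ y, 0 ≤ φ θ y)
    (hC : MeasurableSet C) (hbdd : BddAbove ((fun θ => ∫ y, φ θ y ∂ν) '' C)) :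
    ∫ y, ∫ θ in C, φ θ y ∂π ∂ν ≤ ⨆ θ ∈ C, ∫ y, φ θ y ∂ν := by
  set S := ⨆ θ ∈ C, ∫ y, φ θ y ∂ν
  have hS : 0 ≤ S :=
    Real.iSup_nonneg fun θ => Real.iSup_nonneg fun _ => integral_nonneg (hφ_nonneg θ)
  rw [← integral_integral_swap hφ]
  calc ∫ θ in C, ∫ y, φ θ y ∂ν ∂π ≤ ∫ _ in C, S ∂π :=
        setIntegral_mono_on hφ.integral_prod_left (integrable_const S) hC
          fun θ hθ => Real.le_biSup_of_bddAbove hbdd hθ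
    _ = π.real C * S := by rw [setIntegral_const, smul_eq_mul]
    _ ≤ S := mul_le_of_le_one_left hS measureReal_le_one

end Fubini

section Posterior

variable {Θ Y : Type*} [MeasurableSpace Θ] {π : Measure Θ} {f : Θ → Y → ℝ} {C : Set Θ}

noncomputable def posterior (π : Measure Θ) (f : Θ → Y → ℝ) (C : Set Θ) (y : Y) : ℝ :=
  (∫ θ in C, f θ y ∂π) / ∫ θ, f θ y ∂π

theorem posterior_nonneg {y : Y} (hf : ∀ θ, 0 ≤ f θ y) : 0 ≤ posterior π f C y :=
  div_nonneg (integral_nonneg hf) (integral_nonneg hf)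

theorem posterior_le_one {y : Y} (hf : ∀ θ, 0 ≤ f θ y) : posterior π f C y ≤ 1 := by
  by_cases hi : Integrable (fun θ => f θ y) π
  · exact div_le_one_of_le₀ (setIntegral_le_integral hi (ae_of_all _ hf)) (integral_nonneg hf)
  · simp [posterior, integral_undef hi]

theorem posterior_mul_le_exp_mul {y : Y} {θstar : Θ} {c : ℝ} (hf : ∀ θ, 0 ≤ f θ y)
    (hθstar : 0 < f θstar y) (hy : Real.exp (-c) ≤ ∫ θ, f θ y / f θstar y ∂π) :
    posterior π f C y * f θstar y ≤ Real.exp c * ∫ θ in C, f θ y ∂π := by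
  set G := ∫ θ, f θ y ∂π
  have hG : Real.exp (-c) * f θstar y ≤ G := by rwa [integral_div, le_div_iff₀ hθstar] at hy
  have hpG : f θstar y ≤ Real.exp c * G :=
    calc f θstar y = Real.exp c * (Real.exp (-c) * f θstar y) := by
          rw [← mul_assoc, ← Real.exp_add]; simp
      _ ≤ Real.exp c * G := by gcongr
  have hG_pos : 0 < G := pos_of_mul_pos_right (hθstar.trans_le hpG) (Real.exp_nonneg c)
  rw [posterior, div_mul_eq_mul_div, div_le_iff₀ hG_pos]
  calc (∫ θ in C, f θ y ∂π) * f θstar y ≤ (∫ θ in C, f θ y ∂π) * (Real.exp c * G) := by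
        gcongr
        exact integral_nonneg hf
    _ = Real.exp c * (∫ θ in C, f θ y ∂π) * G := by ring

theorem posterior_mul_le_add_indicator {κ : Y → ℝ} (hκ : ∀ y, 0 ≤ κ y ∧ κ y ≤ 1)
    (hfpos : ∀ θ y, 0 < f θ y) {θstar : Θ} {c : ℝ} {H : Set Y}
    (hH : ∀ y ∈ H, Real.exp (-c) ≤ ∫ θ, f θ y / f θstar y ∂π) (y : Y) :
    posterior π f C y * f θstar y ≤ κ y * f θstar y +
      H.indicator (fun y => Real.exp c * ∫ θ in C, (1 - κ y) * f θ y ∂π) y +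
        Hᶜ.indicator (f θstar) y := by
  have hf (θ : Θ) : 0 ≤ f θ y := (hfpos θ y).le
  have hθstar := hfpos θstar y
  have h0 := posterior_nonneg (π := π) (C := C) hf
  have h1 := posterior_le_one (π := π) (C := C) hf
  have hsplit : (1 - κ y) * (posterior π f C y * f θstar y) ≤
      H.indicator (fun y => Real.exp c * ∫ θ in C, (1 - κ y) * f θ y ∂π) y +
        Hᶜ.indicator (f θstar) y := by
    by_cases hy : y ∈ H
    · rw [Set.indicator_of_mem hy, Set.indicator_of_notMem (Set.notMem_compl_iff.2 hy),
        add_zero, integral_const_mul, mul_left_comm (Real.exp c)]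
      exact mul_le_mul_of_nonneg_left (posterior_mul_le_exp_mul hf hθstar (hH y hy))
        (sub_nonneg.2 (hκ y).2)
    · rw [Set.indicator_of_notMem hy, Set.indicator_of_mem (Set.mem_compl hy), zero_add]
      nlinarith [mul_nonneg (hκ y).1 (mul_nonneg h0 hθstar.le),
        mul_nonneg (sub_nonneg.2 h1) hθstar.le]
  nlinarith [mul_nonneg (mul_nonneg (hκ y).1 hθstar.le) (sub_nonneg.2 h1)]

theorem integral_posterior_mul_le [MeasurableSpace Y] {ν : Measure Y} {κ : Y → ℝ}
    (hκ : ∀ y, 0 ≤ κ y ∧ κ y ≤ 1) (hfpos : ∀ θ y, 0 < f θ y) {θstar : Θ} {c : ℝ} {H : Set Y}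
    (hH : ∀ y ∈ H, Real.exp (-c) ≤ ∫ θ, f θ y / f θstar y ∂π) (hHmeas : MeasurableSet H)
    (hθstar : Integrable (f θstar) ν) (hκ_int : Integrable (fun y => κ y * f θstar y) ν)
    (hΦ_int : Integrable (fun y => ∫ θ in C, (1 - κ y) * f θ y ∂π) ν) :
    ∫ y, posterior π f C y * f θstar y ∂ν ≤ (∫ y, κ y * f θstar y ∂ν) +
      Real.exp c * (∫ y in H, ∫ θ in C, (1 - κ y) * f θ y ∂π ∂ν) + ∫ y in Hᶜ, f θstar y ∂ν := by
  have hΦH_int : Integrable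
      (H.indicator fun y => Real.exp c * ∫ θ in C, (1 - κ y) * f θ y ∂π) ν :=
    (hΦ_int.const_mul (Real.exp c)).indicator hHmeas
  calc ∫ y, posterior π f C y * f θstar y ∂ν
      ≤ ∫ y, κ y * f θstar y + H.indicator (fun y => Real.exp c *
          ∫ θ in C, (1 - κ y) * f θ y ∂π) y + Hᶜ.indicator (f θstar) y ∂ν :=
        integral_mono_of_nonneg
          (ae_of_all _ fun y => mul_nonneg (posterior_nonneg fun θ => (hfpos θ y).le)
            (hfpos θstar y).le)
          ((hκ_int.add hΦH_int).add (hθstar.indicator hHmeas.compl))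
          (ae_of_all _ (posterior_mul_le_add_indicator hκ hfpos hH))
    _ = _ := by
        rw [integral_add, integral_add hκ_int hΦH_int, integral_indicator hHmeas,
          integral_indicator hHmeas.compl, integral_const_mul]
        exacts [hκ_int.add hΦH_int, hθstar.indicator hHmeas.compl]

end Posterior

theorem stmt_12_general {Θ Y : Type*} [MeasurableSpace Θ] [MeasurableSpace Y]
    (π : Measure Θ) [IsProbabilityMeasure π] (ν : Measure Y) [SigmaFinite ν]
    (f : Θ → Y → ℝ)
    (hfmeas : Measurable (Function.uncurry f))
    (hfpos : ∀ θ y, 0 < f θ y)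
    (hfint : ∀ θ, Integrable (f θ) ν)
    (θstar : Θ) (C : Set Θ) (hC : MeasurableSet C)
    (κ : Y → ℝ) (hκmeas : Measurable κ) (hκ : ∀ y, 0 ≤ κ y ∧ κ y ≤ 1)
    (c : ℝ)
    (H : Set Y) (hH : H = {y | Real.exp (-c) ≤ ∫ θ, f θ y / f θstar y ∂π})
    (post : Y → ℝ)
    (hpost : post = fun y => (∫ θ in C, f θ y ∂π) / ∫ θ, f θ y ∂π)
    (hbdd : BddAbove ((fun θ => ∫ y, (1 - κ y) * f θ y ∂ν) '' C)) :
    ∫ y, post y * f θstar y ∂ν ≤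
      (∫ y, κ y * f θstar y ∂ν) +
        Real.exp c * (⨆ θ ∈ C, ∫ y, (1 - κ y) * f θ y ∂ν) +
          ∫ y in Hᶜ, f θstar y ∂ν := by
  obtain rfl : post = posterior π f C := hpost
  have hHmeas : MeasurableSet H := hH ▸ measurableSet_le measurable_const
    (StronglyMeasurable.integral_prod_left (hfmeas.div
      ((hfmeas.comp measurable_prodMk_left).comp measurable_snd)).stronglyMeasurable).measurable
  have hκ_abs (y : Y) : |κ y| ≤ 1 := abs_le.2 ⟨by linarith [hκ y], (hκ y).2⟩
  have h1κ_abs (y : Y) : |1 - κ y| ≤ 1 := abs_le.2 ⟨by linarith [hκ y], by linarith [hκ y]⟩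
  have hφ_nonneg (θ : Θ) (y : Y) : 0 ≤ (1 - κ y) * f θ y :=
    mul_nonneg (sub_nonneg.2 (hκ y).2) (hfpos θ y).le
  have hφ := integrable_restrict_prod_of_bddAbove (π := π)
    ((measurable_const.sub (hκmeas.comp measurable_snd)).mul hfmeas).stronglyMeasurable hφ_nonneg hC
    (fun θ _ => (hfint θ).bdd_mul (measurable_const.sub hκmeas).aestronglyMeasurable
      (ae_of_all _ h1κ_abs)) hbdd
  have hΦ_int := hφ.integral_prod_right
  have hΦ_le : ∫ y in H, ∫ θ in C, (1 - κ y) * f θ y ∂π ∂ν ≤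
      ⨆ θ ∈ C, ∫ y, (1 - κ y) * f θ y ∂ν :=
    (setIntegral_le_integral hΦ_int (ae_of_all _ fun y => integral_nonneg (hφ_nonneg · y))).trans
      (integral_setIntegral_le_biSup hφ hφ_nonneg hC hbdd)
  calc ∫ y, posterior π f C y * f θstar y ∂ν
      ≤ (∫ y, κ y * f θstar y ∂ν) + Real.exp c * (∫ y in H, ∫ θ in C, (1 - κ y) * f θ y ∂π ∂ν) +
          ∫ y in Hᶜ, f θstar y ∂ν :=
        integral_posterior_mul_le hκ hfpos (fun y hy => hH.le hy) hHmeas (hfint θstar)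
          ((hfint θstar).bdd_mul hκmeas.aestronglyMeasurable (ae_of_all _ hκ_abs)) hΦ_int
    _ ≤ _ := by gcongr

/-- Posterior decomposition bound: with test `κ`, set of parameters `C`, and event
`H = {y : ∫ f_θ(y)/f_{θ*}(y) π(dθ) ≥ e^{-c}}`,
`E_{θ*}[Π(C|y)] ≤ E_{θ*}[κ] + e^c · sup_{θ∈C} E_θ[1-κ] + P_{θ*}(H^c)`. -/
theorem stmt_12 {Θ Y : Type*} [MeasurableSpace Θ] [MeasurableSpace Y]
    (π : Measure Θ) [IsProbabilityMeasure π] (ν : Measure Y) [SigmaFinite ν]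
    (f : Θ → Y → ℝ)
    (hfmeas : Measurable (Function.uncurry f))
    (hfpos : ∀ θ y, 0 < f θ y)
    (hfdens : ∀ θ, ∫ y, f θ y ∂ν = 1)
    (hfint : ∀ θ, Integrable (f θ) ν)
    (θstar : Θ) (C : Set Θ) (hC : MeasurableSet C)
    (κ : Y → ℝ) (hκmeas : Measurable κ) (hκ : ∀ y, 0 ≤ κ y ∧ κ y ≤ 1)
    (c : ℝ) (hc : 0 < c)
    (H : Set Y) (hH : H = {y | Real.exp (-c) ≤ ∫ θ, f θ y / f θstar y ∂π})
    (hHmeas : MeasurableSet H)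
    (post : Y → ℝ)
    (hpost : post = fun y => (∫ θ in C, f θ y ∂π) / ∫ θ, f θ y ∂π)
    (hpostint : Integrable (fun y => post y * f θstar y) ν)
    (hbdd : BddAbove ((fun θ => ∫ y, (1 - κ y) * f θ y ∂ν) '' C)) :
    ∫ y, post y * f θstar y ∂ν ≤
      (∫ y, κ y * f θstar y ∂ν) +
        Real.exp c * (⨆ θ ∈ C, ∫ y, (1 - κ y) * f θ y ∂ν) +
          ∫ y in Hᶜ, f θstar y ∂ν :=
  stmt_12_general π ν f hfmeas hfpos hfint θstar C hC κ hκmeas hκ c H hH post hpost hbdd
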